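/- If a hypergraph H is hereditary (p,q)-Helly, then H is (p,q')-Helly for every integer q' ≥ q. -/

import Mathlib

/-!
Fix a nonempty `(p,q')`-intersecting `F ⊆ H` and a set `S` of `k ≤ q' - q` vertices of its
core. Deleting `S` from every edge lowers every core by at most `k`, so the restricted
family `{E \ S}` is `(p,q)`-intersecting. Its members are nonempty, as every edge of `F` has
at least `q' > k` vertices, so it lives in the subhypergraph of `H` induced by the
vertices outside `S`, hence its core `hCore F \ S` has at least `q` elements. Taking
`k = min(|hCore F|, q' - q)`, the case `S = hCore F` is impossible since `q > 0`, so
`|hCore F| ≥ q + (q' - q) = q'`.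
-/

/-- The core of a family of sets: the elements lying in all members (and in at least one,
so that the core of the empty family is empty, matching that the vertex set of a
hypergraph is the union of its edges).  For a nonempty family this is just the
intersection of all members. -/
def hCore {β : Type*} (F : Finset (Finset β)) : Set β :=
  {x | (∃ E ∈ F, x ∈ E) ∧ ∀ E ∈ F, x ∈ E}

/-- A family is `(p,q)`-intersecting if every nonempty subfamily of at most `p` sets
has core of cardinality at least `q`. -/
def IsIntersecting {β : Type*} (p q : ℕ) (F : Finset (Finset β)) : Prop :=
  ∀ F' ⊆ F, F'.Nonempty → F'.card ≤ p → q ≤ (hCore F').ncard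

/-- A family is `(p,q)`-Helly if every nonempty `(p,q)`-intersecting subfamily
has core of cardinality at least `q`. -/
def IsHelly {β : Type*} (p q : ℕ) (F : Finset (Finset β)) : Prop :=
  ∀ F' ⊆ F, F'.Nonempty → IsIntersecting p q F' → q ≤ (hCore F').ncard
/-- The subhypergraph of `H` induced by the vertex subset `X`: restrict every edge to
`X` and discard the empty intersections. -/
def subhyper {α : Type*} [DecidableEq α] (H : Finset (Finset α)) (X : Finset α) :
    Finset (Finset α) :=
  (H.image fun E => E ∩ X).filter fun E => E.Nonempty

/-- `H` is hereditary `(p,q)`-Helly if every subhypergraph of `H` is `(p,q)`-Helly. -/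
def IsHereditaryHelly {α : Type*} [DecidableEq α] (p q : ℕ)
    (H : Finset (Finset α)) : Prop :=
  ∀ X : Finset α, IsHelly p q (subhyper H X)

open Finset

section Core

variable {β : Type*}

lemma hCore_singleton (E : Finset β) : hCore {E} = ↑E := by
  ext x
  simp [hCore]

lemma hCore_finite (F : Finset (Finset β)) : (hCore F).Finite :=
  (F.finite_toSet.biUnion fun E _ => E.finite_toSet).subset
    fun _ ⟨⟨_, hE, hx⟩, _⟩ => Set.mem_biUnion hE hx

variable [DecidableEq β]

lemma hCore_image_sdiff (F : Finset (Finset β)) (S : Finset β) :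
    hCore (F.image (· \ S)) = hCore F \ ↑S := by
  ext x
  simp only [hCore, Set.mem_sdiff, Set.mem_ofPred_eq, mem_coe, forall_mem_image,
    exists_mem_image, mem_sdiff]
  grind

end Core

namespace IsIntersecting

variable {β : Type*} {p q : ℕ} {F : Finset (Finset β)}

lemma mono {q' : ℕ} (hq : q ≤ q') (h : IsIntersecting p q' F) : IsIntersecting p q F :=
  fun G hG hGne hGp => hq.trans (h G hG hGne hGp)

lemma le_card_of_mem (h : IsIntersecting p q F) (hp : 0 < p) {E : Finset β} (hE : E ∈ F) :
    q ≤ #E := by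
  simpa [hCore_singleton] using h {E} (singleton_subset_iff.mpr hE) (singleton_nonempty E) hp

lemma image_sdiff [DecidableEq β] {S : Finset β} (h : IsIntersecting p (q + #S) F) :
    IsIntersecting p q (F.image (· \ S)) := by
  intro G hG hGne hGp
  have hsurj : Set.SurjOn (· \ S) ↑F ↑G := by
    rw [Set.SurjOn, ← coe_image]
    exact coe_subset.mpr hG
  obtain ⟨G₀, hG₀F, hinj, rfl⟩ := exists_subset_injOn_image_eq_of_surjOn _ G hsurj
  have hG₀ : q + #S ≤ (hCore G₀).ncard :=
    h G₀ (coe_subset.mp hG₀F) (image_nonempty.mp hGne) ((card_image_of_injOn hinj).ge.trans hGp)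
  have hdiff := Set.le_ncard_sdiff (S : Set β) (hCore G₀)
  rw [Set.ncard_coe_finset] at hdiff
  rw [hCore_image_sdiff]
  omega

end IsIntersecting

section Hereditary

variable {α : Type*} [DecidableEq α]

lemma sdiff_mem_subhyper {H : Finset (Finset α)} {E : Finset α} (hE : E ∈ H) (S : Finset α)
    (hES : (E \ S).Nonempty) : E \ S ∈ subhyper H (H.sup id \ S) := by
  have hEX : E ∩ (H.sup id \ S) = E \ S := by
    have hEV : E ⊆ H.sup id := le_sup (f := id) hE
    rw [← inter_sdiff_assoc, inter_eq_left.mpr hEV]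
  exact mem_filter.mpr ⟨mem_image.mpr ⟨E, hE, hEX⟩, hES⟩

lemma IsHereditaryHelly.add_card_le_ncard_hCore {p q : ℕ} {H : Finset (Finset α)}
    (h : IsHereditaryHelly p q H) (hp : 0 < p) (hq : 0 < q) {F : Finset (Finset α)}
    (hFH : F ⊆ H) (hFne : F.Nonempty) {S : Finset α} (hS : ↑S ⊆ hCore F)
    (hint : IsIntersecting p (q + #S) F) : q + #S ≤ (hCore F).ncard := by
  have hsub : F.image (· \ S) ⊆ subhyper H (H.sup id \ S) := by
    intro B hB
    obtain ⟨E, hE, rfl⟩ := mem_image.mp hB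
    have hES : #S < #E := by have := hint.le_card_of_mem hp hE; omega
    exact sdiff_mem_subhyper (hFH hE) S (sdiff_nonempty_of_card_lt_card hES)
  have hcore := h _ _ hsub (hFne.image _) hint.image_sdiff
  rw [hCore_image_sdiff, Set.ncard_sdiff hS, Set.ncard_coe_finset] at hcore
  omega

end Hereditary

theorem stmt12_general {α : Type*} [DecidableEq α] (p q : ℕ) (hp : 0 < p) (hq : 0 < q)
    (H : Finset (Finset α))
    (h : IsHereditaryHelly p q H) :
    ∀ q' : ℕ, q ≤ q' → IsHelly p q' H := by
  intro q' hq' F hFH hFne hint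
  obtain ⟨C, hC⟩ : ∃ C : Finset α, hCore F = ↑C := ⟨(hCore_finite F).toFinset, by simp⟩
  obtain ⟨S, hSC, hScard⟩ := exists_subset_card_eq (min_le_left #C (q' - q))
  have hbound := h.add_card_le_ncard_hCore hp hq hFH hFne (hC ▸ coe_subset.mpr hSC)
    (hint.mono (by omega))
  rw [hC, Set.ncard_coe_finset] at hbound ⊢
  omega

/-- If a hypergraph `H` is hereditary `(p,q)`-Helly, then `H` is `(p,q')`-Helly for
every integer `q' ≥ q`. -/
theorem stmt12 {α : Type*} [DecidableEq α] (p q : ℕ) (hp : 0 < p) (hq : 0 < q)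
    (H : Finset (Finset α)) (hne : ∀ E ∈ H, E.Nonempty)
    (h : IsHereditaryHelly p q H) :
    ∀ q' : ℕ, q ≤ q' → IsHelly p q' H :=
  stmt12_general p q hp hq H h
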